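/- Sublinear bound on components of optimal cycles: Let X̄ be a closed Riemannian manifold with b₁(X̄) = n, diam(X̄) < D, ω(H₁(X̄,ℤ)) < Ω. For any torsionless class γ ∈ H₁(X̄,ℤ), the minimal number N(γ) of connected components of a length-minimizing integral cycle representing γ satisfies: either N(γ) ≤ N(n,D,Ω) for an explicit constant depending only on (n,D,Ω), or N(γ) ≤ 2·3^{2n}·Ω^{1/(n+1)}·|γ|_{H₁}^{n/(n+1)}. -/

import Mathlib

open Filter

private lemma aux_case1 (n : ℕ) (hn : 1 ≤ n) (x : ℝ) (hx : 0 ≤ x) (w : ℝ)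
    (hwx : w ≤ 2 * 6 ^ n * (n : ℝ) ^ n * x) :
    w ≤ 2 ^ (18 * n ^ 3) * (n : ℝ) ^ (2 * n)
        * ((n.factorial : ℝ)) ^ (n * (n + 2)) * (x + 1) ^ (6 * n ^ 2) := by
  have hn0 : (0:ℝ) < (n:ℝ) := by exact_mod_cast Nat.pos_of_ne_zero (by omega)
  have h1 : (2:ℝ) * 6 ^ n ≤ 2 ^ (18 * n ^ 3) := by
    calc (2:ℝ) * 6 ^ n ≤ 2 * 8 ^ n := by
          gcongr; norm_num
      _ = 2 ^ (3 * n + 1) := by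
          rw [pow_add, pow_mul]; norm_num [mul_comm]
      _ ≤ 2 ^ (18 * n ^ 3) := by
          apply pow_le_pow_right₀ (by norm_num)
          nlinarith [hn, sq_nonneg n]
  have h2 : (n:ℝ) ^ n ≤ (n:ℝ) ^ (2 * n) := by
    apply pow_le_pow_right₀ (by exact_mod_cast hn) (by omega)
  have h3 : (1:ℝ) ≤ ((n.factorial : ℝ)) ^ (n * (n + 2)) := by
    apply one_le_pow₀
    exact_mod_cast Nat.one_le_iff_ne_zero.2 (Nat.factorial_ne_zero n)
  have h4 : x ≤ (x + 1) ^ (6 * n ^ 2) := by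
    calc x ≤ x + 1 := by linarith
      _ ≤ (x + 1) ^ (6 * n ^ 2) := le_self_pow₀ (by linarith) (by positivity)
  calc w ≤ 2 * 6 ^ n * (n : ℝ) ^ n * x := hwx
    _ ≤ (2 ^ (18 * n ^ 3) * (n : ℝ) ^ (2 * n) * ((n.factorial : ℝ)) ^ (n * (n + 2)))
          * ((x + 1) ^ (6 * n ^ 2)) := by
        apply mul_le_mul _ h4 hx (by positivity)
        calc (2:ℝ) * 6 ^ n * (n:ℝ) ^ n ≤ 2 ^ (18 * n ^3) * (n:ℝ) ^ (2*n) := by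
              apply mul_le_mul h1 h2 (by positivity) (by positivity)
          _ ≤ 2 ^ (18 * n ^3) * (n:ℝ) ^ (2*n) * ((n.factorial : ℝ)) ^ (n * (n + 2)) := by
              exact le_mul_of_one_le_right (by positivity) h3
    _ = _ := by ring

private lemma aux_case2 (n : ℕ) (hn : 1 ≤ n) (Nr M Om : ℝ) (hN : 0 ≤ Nr) (hOm : 0 < Om)
    (hM : 0 ≤ M)
    (h : Nr / 4 * (Nr / (2 * Om)) ^ ((n:ℝ)⁻¹) ≤ M) :
    Nr ≤ 2 * 3 ^ (2 * n) * Om ^ (((n : ℝ) + 1)⁻¹) * M ^ ((n : ℝ) / ((n : ℝ) + 1)) := by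
  have hp : (0:ℝ) < (n:ℝ) := by exact_mod_cast Nat.pos_of_ne_zero (by omega)
  set p : ℝ := (n:ℝ) with hpdef
  have hp1 : (0:ℝ) < p + 1 := by linarith
  have h2Om : (0:ℝ) < 2 * Om := by linarith
  have key : Nr ^ ((p + 1) / p) ≤ 4 * (2 * Om) ^ (p⁻¹) * M := by
    have e1 : Nr ^ ((p + 1) / p) = Nr * Nr ^ (p⁻¹) := by
      rw [show (p+1)/p = 1 + p⁻¹ by field_simp, Real.rpow_add' hN (by positivity), Real.rpow_one]
    have e2 : (Nr / (2 * Om)) ^ (p⁻¹) = Nr ^ (p⁻¹) / (2 * Om) ^ (p⁻¹) := by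
      rw [Real.div_rpow hN (le_of_lt h2Om)]
    have h4 : (0:ℝ) < (2 * Om) ^ (p⁻¹) := Real.rpow_pos_of_pos h2Om _
    rw [e2] at h
    rw [e1]
    have := mul_le_mul_of_nonneg_left h (le_of_lt (mul_pos (show (0:ℝ)<4 by norm_num) h4))
    calc Nr * Nr ^ (p⁻¹) = 4 * (2*Om)^(p⁻¹) * (Nr / 4 * (Nr ^ (p⁻¹) / (2*Om)^(p⁻¹))) := by
          field_simp
      _ ≤ 4 * (2*Om)^(p⁻¹) * M := this
  have hq : (0:ℝ) ≤ p / (p + 1) := by positivity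
  have hNr' : Nr = (Nr ^ ((p+1)/p)) ^ (p/(p+1)) := by
    rw [← Real.rpow_mul hN, show (p+1)/p * (p/(p+1)) = 1 by field_simp, Real.rpow_one]
  have step2 := Real.rpow_le_rpow (Real.rpow_nonneg hN _) key hq
  rw [← hNr'] at step2
  have hOm' : (0:ℝ) ≤ (2*Om) ^ (p⁻¹) := le_of_lt (Real.rpow_pos_of_pos h2Om _)
  have e3 : (4 * (2 * Om) ^ (p⁻¹) * M) ^ (p/(p+1))
      = 4 ^ (p/(p+1)) * (2*Om) ^ ((p+1)⁻¹) * M ^ (p/(p+1)) := by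
    rw [Real.mul_rpow (by positivity) hM, Real.mul_rpow (by norm_num) hOm',
      ← Real.rpow_mul (le_of_lt h2Om)]
    congr 3
    field_simp
  have e4 : (2*Om) ^ ((p+1)⁻¹) = 2 ^ ((p+1)⁻¹) * Om ^ ((p+1)⁻¹) :=
    Real.mul_rpow (by norm_num) (le_of_lt hOm)
  have b1 : (4:ℝ) ^ (p/(p+1)) ≤ 4 := by
    nth_rewrite 2 [show (4:ℝ) = 4 ^ (1:ℝ) by rw [Real.rpow_one]]
    apply Real.rpow_le_rpow_of_exponent_le (by norm_num)
    rw [div_le_one hp1]; linarith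
  have b2 : (2:ℝ) ^ ((p+1)⁻¹) ≤ 2 := by
    nth_rewrite 2 [show (2:ℝ) = 2 ^ (1:ℝ) by rw [Real.rpow_one]]
    apply Real.rpow_le_rpow_of_exponent_le (by norm_num)
    rw [inv_le_one_iff₀]; right; linarith
  have b3 : (9:ℝ) ≤ 3 ^ (2*n) := by
    calc (9:ℝ) = 3 ^ (2*1) := by norm_num
      _ ≤ 3 ^ (2*n) := by apply pow_le_pow_right₀ (by norm_num) (by omega)
  have hOmp : (0:ℝ) ≤ Om ^ ((p+1)⁻¹) := Real.rpow_nonneg (le_of_lt hOm) _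
  have hMp : (0:ℝ) ≤ M ^ (p/(p+1)) := Real.rpow_nonneg hM _
  calc Nr ≤ (4 * (2 * Om) ^ (p⁻¹) * M) ^ (p/(p+1)) := step2
    _ = 4 ^ (p/(p+1)) * (2 ^ ((p+1)⁻¹) * Om ^ ((p+1)⁻¹)) * M ^ (p/(p+1)) := by rw [e3, e4]
    _ ≤ 4 * (2 * Om ^ ((p+1)⁻¹)) * M ^ (p/(p+1)) := by
        apply mul_le_mul _ le_rfl hMp (by positivity)
        apply mul_le_mul b1 (by apply mul_le_mul b2 le_rfl hOmp (by norm_num)) (by positivity) (by norm_num)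
    _ ≤ 2 * 3 ^ (2 * n) * Om ^ ((p+1)⁻¹) * M ^ (p/(p+1)) := by
        apply mul_le_mul _ le_rfl hMp (by positivity)
        calc 4 * (2 * Om ^ ((p+1)⁻¹)) = 8 * Om ^ ((p+1)⁻¹) := by ring
          _ ≤ 2 * 3 ^ (2*n) * Om ^ ((p+1)⁻¹) := by
              apply mul_le_mul_of_nonneg_right _ hOmp
              linarith

private lemma aux_vectors (n : ℕ) (S : Set (Fin n → ℤ)) (hS : ∀ g : Fin n → ℤ, g ∈ Submodule.span ℤ S) :
    ∃ v : Fin n → (Fin n → ℤ), (∀ i, v i ∈ S) ∧ (Matrix.of fun i j => v j i).det ≠ 0 := by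
  classical
  set c : (Fin n → ℤ) → (Fin n → ℚ) := fun g j => (g j : ℚ) with hc
  have hczero : c 0 = 0 := funext fun j => by simp [hc]
  have hcadd : ∀ a b, c (a + b) = c a + c b := fun a b => funext fun j => by
    simp [hc]
  have hczsmul : ∀ (z : ℤ) a, c (z • a) = (z : ℚ) • c a := fun z a => funext fun j => by
    simp [hc]
  have hspan : ∀ g : Fin n → ℤ, c g ∈ Submodule.span ℚ (c '' S) := by
    intro g
    refine Submodule.span_induction (p := fun x _ => c x ∈ Submodule.span ℚ (c '' S))
      ?_ ?_ ?_ ?_ (hS g)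
    · intro x hx; exact Submodule.subset_span ⟨x, hx, rfl⟩
    · show c 0 ∈ _; rw [hczero]; exact Submodule.zero_mem _
    · intro x y _ _ hx hy; show c (x + y) ∈ _; rw [hcadd]; exact Submodule.add_mem _ hx hy
    · intro a x _ hx; show c (a • x) ∈ _; rw [hczsmul]; exact Submodule.smul_mem _ _ hx
  have htop : Submodule.span ℚ (c '' S) = ⊤ := by
    rw [eq_top_iff, ← (Pi.basisFun ℚ (Fin n)).span_eq]
    apply Submodule.span_le.2
    rintro x ⟨j, rfl⟩
    have e : Pi.basisFun ℚ (Fin n) j = c (Pi.single j 1) := by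
      funext i
      by_cases h : i = j <;> simp [hc, Pi.single_apply, h, Pi.basisFun_apply]
    rw [e]
    exact hspan _
  obtain ⟨b, hbsub, hbspan, hbind⟩ := exists_linearIndependent ℚ (c '' S)
  rw [htop] at hbspan
  have hbfin : b.Finite := hbind.setFinite
  haveI : Fintype b := hbfin.fintype
  have hbbasis : Module.Basis b ℚ (Fin n → ℚ) := Module.Basis.mk hbind (by
    rw [Subtype.range_coe, hbspan])
  have hcard : Fintype.card b = n := by
    have h1 := Module.finrank_eq_card_basis hbbasis
    rw [Module.finrank_fintype_fun_eq_card, Fintype.card_fin] at h1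
    omega
  obtain e := Fintype.equivFinOfCardEq hcard
  choose f hfS hfc using fun x : b => (hbsub x.2 : (x : Fin n → ℚ) ∈ c '' S)
  refine ⟨fun i => f (e.symm i), fun i => hfS _, ?_⟩
  intro hdet0
  set Vz : Matrix (Fin n) (Fin n) ℤ := Matrix.of fun i j => (f (e.symm j)) i with hVz
  have hdetq : (Vz.map (Int.cast : ℤ → ℚ)).det = 0 := by
    have h1 := RingHom.map_det (Int.castRingHom ℚ) Vz
    rw [RingHom.mapMatrix_apply] at h1
    rw [show ((Int.cast : ℤ → ℚ)) = ⇑(Int.castRingHom ℚ) from rfl, ← h1, hdet0]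
    simp
  obtain ⟨w, hw0, hww⟩ := Matrix.exists_mulVec_eq_zero_iff.2 hdetq
  have hli := (hbind.comp e.symm e.symm.injective)
  rw [Fintype.linearIndependent_iff] at hli
  have hsum : ∑ j, w j • ((e.symm j : Fin n → ℚ)) = 0 := by
    funext i
    have h3 := congrFun hww i
    simp only [Matrix.mulVec, dotProduct, Matrix.map_apply, hVz, Matrix.of_apply,
      Pi.zero_apply] at h3
    rw [Finset.sum_apply, Pi.zero_apply]
    rw [← h3]
    apply Finset.sum_congr rfl
    intro j _
    rw [Pi.smul_apply, ← hfc (e.symm j)]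
    simp [hc]
    ring
  exact hw0 (funext (hli w hsum))


private lemma aux_count (n : ℕ) (hn1 : 1 ≤ n) (D ω : ℝ) (hD : 0 < D)
    (d : (Fin n → ℤ) → ℝ)
    (hdnn : ∀ a, 0 ≤ d a)
    (hdadd : ∀ a b, d (a + b) ≤ d a + d b)
    (hd0 : d 0 = 0)
    (hpd : ∀ r : ℝ, {γ : Fin n → ℤ | d γ ≤ r}.Finite)
    (hω : Tendsto (fun R : ℝ => (({γ : Fin n → ℤ | d γ < R}.ncard : ℝ)) / R ^ n)
      atTop (nhds ω))
    (nst : (Fin n → ℤ) → ℝ)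
    (hnst : ∀ γ, Tendsto (fun k : ℕ => d (k • γ) / (k : ℝ)) atTop (nhds (nst γ)))
    (hnstnn : ∀ a, 0 ≤ nst a)
    (v : Fin n → (Fin n → ℤ)) (hvd : ∀ i, d (v i) ≤ 3 * D)
    (hvdet : (Matrix.of fun i j => v j i).det ≠ 0)
    (t : ℝ) (ht : 0 ≤ t) (A : Finset (Fin n → ℤ)) (hA : ∀ a ∈ A, nst a ≤ t) :
    (A.card : ℝ) ≤ ω * (t + 3 * n * D) ^ n := by
  classical
  have hnR : (1:ℝ) ≤ (n:ℝ) := by exact_mod_cast hn1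
  have hdsmul : ∀ (m : ℕ) a, d (m • a) ≤ m * d a := by
    intro m a
    induction m with
    | zero => simp [hd0]
    | succ k ih =>
      calc d ((k+1) • a) = d (k • a + a) := by rw [succ_nsmul]
        _ ≤ d (k • a) + d a := hdadd _ _
        _ ≤ k * d a + d a := by linarith
        _ = ((k+1 : ℕ) : ℝ) * d a := by push_cast; ring
  have hdsum : ∀ (s : Finset (Fin n)) (f : Fin n → (Fin n → ℤ)),
      d (∑ i ∈ s, f i) ≤ ∑ i ∈ s, d (f i) := by
    intro s f
    induction s using Finset.induction_on with
    | empty => simp [hd0]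
    | insert x s hx ih =>
      rw [Finset.sum_insert hx, Finset.sum_insert hx]
      exact le_trans (hdadd _ _) (by linarith)
  -- main estimate for each η > 0
  have main : ∀ η : ℝ, 0 < η → (A.card : ℝ) ≤ ω * (t + η + 3 * n * D) ^ n := by
    intro η hη
    -- growth constants
    have hC : ∀ a ∈ A, ∃ C : ℝ, 0 ≤ C ∧ ∀ K : ℕ, d (K • a) ≤ K * (t + η) + C := by
      intro a ha
      have h1 : ∀ᶠ k : ℕ in atTop, d (k • a) / k < nst a + η :=
        (hnst a).eventually_lt_const (by linarith)
      obtain ⟨k₀, hk₀lt, hk₀1⟩ := (h1.and (eventually_ge_atTop 1)).exists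
      have hk₀pos : (0:ℝ) < (k₀ : ℝ) := by exact_mod_cast hk₀1
      have hd_k₀ : d (k₀ • a) ≤ (k₀:ℝ) * (nst a + η) := by
        rw [div_lt_iff₀ hk₀pos] at hk₀lt
        linarith
      refine ⟨(k₀ : ℝ) * d a, mul_nonneg (by positivity) (hdnn a), ?_⟩
      intro K
      have hdiv : K • a = (K / k₀) • (k₀ • a) + (K % k₀) • a := by
        have e : K / k₀ * k₀ + K % k₀ = K := by
          rw [mul_comm (K / k₀) k₀]; exact Nat.div_add_mod K k₀
        rw [smul_smul, ← add_smul, e]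
      have hb1 : d ((K / k₀) • (k₀ • a)) ≤ ((K / k₀ : ℕ) : ℝ) * d (k₀ • a) := hdsmul _ _
      have hb2 : d ((K % k₀) • a) ≤ ((K % k₀ : ℕ) : ℝ) * d a := hdsmul _ _
      have hmod : ((K % k₀ : ℕ) : ℝ) ≤ (k₀ : ℝ) := by
        exact_mod_cast le_of_lt (Nat.mod_lt K (by omega))
      have hdivle : ((K / k₀ : ℕ) : ℝ) * (k₀:ℝ) ≤ (K:ℝ) := by
        exact_mod_cast Nat.div_mul_le_self K k₀
      have hnstt : nst a + η ≤ t + η := by linarith [hA a ha]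
      have h0le : (0:ℝ) ≤ nst a + η := by linarith [hnstnn a]
      calc d (K • a) ≤ d ((K / k₀) • (k₀ • a)) + d ((K % k₀) • a) := by
            rw [hdiv]; exact hdadd _ _
        _ ≤ ((K / k₀ : ℕ) : ℝ) * ((k₀:ℝ) * (nst a + η)) + (k₀:ℝ) * d a := by
            have h3 := mul_le_mul_of_nonneg_left hd_k₀
              (by positivity : (0:ℝ) ≤ ((K / k₀ : ℕ) : ℝ))
            have h4 := mul_le_mul_of_nonneg_right hmod (hdnn a)
            linarith
        _ ≤ (K:ℝ) * (t + η) + (k₀:ℝ) * d a := by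
            have h5 : ((K / k₀ : ℕ) : ℝ) * ((k₀:ℝ) * (nst a + η)) ≤ (K:ℝ) * (nst a + η) := by
              rw [← mul_assoc]
              exact mul_le_mul_of_nonneg_right hdivle h0le
            have h6 : (K:ℝ) * (nst a + η) ≤ (K:ℝ) * (t + η) := by
              apply mul_le_mul_of_nonneg_left hnstt (by positivity)
            linarith
    choose! C hC0 hCK using hC
    set CA : ℝ := ∑ a ∈ A, C a with hCA_def
    have hCA : ∀ a ∈ A, C a ≤ CA := fun a ha =>
      Finset.single_le_sum (fun i hi => hC0 i hi) ha
    have hCA0 : 0 ≤ CA := Finset.sum_nonneg (fun i hi => hC0 i hi)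
    set u : ℝ := t + η + 3 * n * D with hu_def
    have hu0 : (0:ℝ) < u := by nlinarith
    set Vz : Matrix (Fin n) (Fin n) ℤ := Matrix.of fun i j => v j i with hVz
    set Dt : ℕ := Vz.det.natAbs with hDt
    have hDt1 : 1 ≤ Dt := Int.natAbs_pos.2 hvdet
    set Kf : ℕ → ℕ := fun m => 1 + m * Dt with hKf
    have hKf1 : ∀ m, 1 ≤ Kf m := fun m => by simp [hKf]
    have hKcop : ∀ m, IsCoprime ((Kf m : ℕ) : ℤ) Vz.det := by
      intro m
      rw [Int.isCoprime_iff_gcd_eq_one]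
      have h1 : Nat.Coprime (Kf m) Dt := by
        have h2 : Kf m = 1 + Dt * m := by rw [hKf]; ring
        rw [h2]
        exact (Nat.coprime_add_mul_left_left 1 Dt m).2 (Nat.coprime_one_left Dt)
      simpa [Int.gcd, hDt] using h1
    -- the cardinality bound for each m
    have hcard : ∀ m : ℕ,
        (A.card : ℝ) * (Kf m : ℝ) ^ n ≤
          (({γ : Fin n → ℤ | d γ < (Kf m : ℝ) * u + (CA + 1)}.ncard : ℝ)) := by
      intro m
      set K : ℕ := Kf m with hK
      have hK1 : 1 ≤ K := hKf1 m
      have hKpos : (0:ℝ) < (K:ℝ) := by exact_mod_cast hK1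
      set R : ℝ := (K : ℝ) * u + (CA + 1) with hR
      have hfin : {γ : Fin n → ℤ | d γ < R}.Finite :=
        (hpd R).subset (fun g hg => show d g ≤ R from le_of_lt hg)
      set T : Finset (Fin n → ℤ) := hfin.toFinset with hT
      set P : Finset ((Fin n → ℤ) × (Fin n → Fin K)) := A ×ˢ Finset.univ with hP
      have hPcard : P.card = A.card * K ^ n := by
        rw [hP, Finset.card_product, Finset.card_univ, Fintype.card_fun]
        simp
      set F : (Fin n → ℤ) × (Fin n → Fin K) → (Fin n → ℤ) :=
        fun p => K • p.1 + ∑ i, ((p.2 i : ℕ)) • v i with hF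
      have hmaps : ∀ p ∈ P, F p ∈ T := by
        rintro ⟨a, w⟩ hp
        rw [hP, Finset.mem_product] at hp
        have ha := hp.1
        rw [hT, Set.Finite.mem_toFinset, Set.mem_setOf_eq]
        have h1 : d (K • a) ≤ (K:ℝ) * (t + η) + C a := hCK a ha K
        have h2 : d (∑ i, ((w i : ℕ)) • v i) ≤ ∑ i : Fin n, ((w i : ℕ) : ℝ) * d (v i) := by
          refine le_trans (hdsum _ _) ?_
          apply Finset.sum_le_sum
          intro i _
          exact hdsmul _ _
        have h3 : ∑ i : Fin n, ((w i : ℕ) : ℝ) * d (v i) ≤ (n:ℝ) * ((K:ℝ) * (3 * D)) := by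
          calc ∑ i : Fin n, ((w i : ℕ) : ℝ) * d (v i)
              ≤ ∑ _i : Fin n, (K:ℝ) * (3 * D) := by
                apply Finset.sum_le_sum
                intro i _
                apply mul_le_mul (by exact_mod_cast le_of_lt (w i).2) (hvd i) (hdnn _)
                  (by positivity)
            _ = (n:ℝ) * ((K:ℝ) * (3 * D)) := by
                rw [Finset.sum_const, Finset.card_univ, Fintype.card_fin, nsmul_eq_mul]
        have h4 : d (F (a, w)) ≤ d (K • a) + d (∑ i, ((w i : ℕ)) • v i) := hdadd _ _
        have h5 : C a ≤ CA := hCA a ha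
        have : d (F (a, w)) ≤ (K:ℝ) * (t + η) + CA + (K:ℝ) * (3 * (n:ℝ) * D) := by
          have e : (n:ℝ) * ((K:ℝ) * (3 * D)) = (K:ℝ) * (3 * (n:ℝ) * D) := by ring
          rw [e] at h3
          linarith
        rw [hR]
        have e2 : (K:ℝ) * u = (K:ℝ) * (t + η) + (K:ℝ) * (3 * (n:ℝ) * D) := by
          rw [hu_def]; ring
        linarith
      have hinj : Set.InjOn F ↑P := by
        rintro ⟨a, w⟩ hp ⟨a', w'⟩ hp' heq
        simp only [Finset.coe_product, Set.mem_prod, Finset.mem_coe] at hp hp'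
        set wd : Fin n → ℤ := fun j => ((w j : ℕ) : ℤ) - ((w' j : ℕ) : ℤ) with hwd
        have hmv : Vz.mulVec wd = (K : ℤ) • (a' - a) := by
          funext i
          have h3 := congrFun heq i
          simp only [hF, Pi.add_apply, Pi.smul_apply, Finset.sum_apply,
            smul_eq_mul, nsmul_eq_mul, Pi.mul_apply, Pi.natCast_apply] at h3
          simp only [Matrix.mulVec, dotProduct, hVz, Matrix.of_apply, hwd,
            Pi.smul_apply, Pi.sub_apply, smul_eq_mul]
          have hsplit : ∑ j, v j i * (((w j : ℕ):ℤ) - ((w' j : ℕ):ℤ))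
              = (∑ j, ((w j : ℕ):ℤ) * v j i) - ∑ j, ((w' j : ℕ):ℤ) * v j i := by
            rw [← Finset.sum_sub_distrib]
            apply Finset.sum_congr rfl
            intros; ring
          rw [hsplit]
          linear_combination h3
        have hdet_smul : Vz.det • wd = (K:ℤ) • Vz.adjugate.mulVec (a' - a) := by
          calc Vz.det • wd = (Vz.det • (1:Matrix (Fin n) (Fin n) ℤ)).mulVec wd := by
                rw [Matrix.smul_mulVec, Matrix.one_mulVec]
            _ = (Vz.adjugate * Vz).mulVec wd := by rw [Matrix.adjugate_mul]
            _ = Vz.adjugate.mulVec (Vz.mulVec wd) := by rw [Matrix.mulVec_mulVec]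
            _ = Vz.adjugate.mulVec ((K:ℤ) • (a' - a)) := by rw [hmv]
            _ = (K:ℤ) • Vz.adjugate.mulVec (a' - a) := Matrix.mulVec_smul _ _ _
        have hwd0 : wd = 0 := by
          funext j
          have hdvd : (K:ℤ) ∣ Vz.det * wd j := by
            refine ⟨Vz.adjugate.mulVec (a' - a) j, ?_⟩
            have h6 := congrFun hdet_smul j
            simpa [smul_eq_mul] using h6
          have hdvd2 : (K:ℤ) ∣ wd j := (hKcop m).dvd_of_dvd_mul_left hdvd
          by_contra hne
          have habs : |wd j| < (K:ℤ) := by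
            have h1 : ((w j : ℕ):ℤ) < K := by exact_mod_cast (w j).2
            have h2 : ((w' j : ℕ):ℤ) < K := by exact_mod_cast (w' j).2
            have h3 : (0:ℤ) ≤ ((w j : ℕ):ℤ) := by positivity
            have h4 : (0:ℤ) ≤ ((w' j : ℕ):ℤ) := by positivity
            rw [hwd, abs_lt]
            constructor <;> simp only <;> omega
          have h7 : (K:ℤ) ≤ |wd j| :=
            Int.le_of_dvd (abs_pos.2 hne) ((dvd_abs _ _).2 hdvd2)
          omega
        have hww' : w = w' := by
          funext j
          have h8 := congrFun hwd0 j
          simp only [hwd, Pi.zero_apply, sub_eq_zero] at h8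
          exact Fin.ext (by exact_mod_cast h8)
        have haa' : a = a' := by
          have h9 : K • a = K • a' := by
            have h10 := heq
            simp only [hF, hww'] at h10
            exact add_right_cancel h10
          funext i
          have h11 := congrFun h9 i
          simp only [Pi.smul_apply, nsmul_eq_mul] at h11
          have hK0 : ((K:ℕ):ℤ) ≠ 0 := by exact_mod_cast (by omega : K ≠ 0)
          exact mul_left_cancel₀ hK0 h11
        rw [Prod.ext_iff]
        exact ⟨haa', hww'⟩
      have hle : P.card ≤ T.card := Finset.card_le_card_of_injOn F hmaps hinj
      have hTcard : (T.card : ℝ) = ({γ : Fin n → ℤ | d γ < R}.ncard : ℝ) := by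
        rw [hT]
        norm_cast
        exact (Set.ncard_eq_toFinset_card _ hfin).symm
      calc (A.card : ℝ) * (K : ℝ) ^ n = (P.card : ℝ) := by
            rw [hPcard]; push_cast; ring
        _ ≤ (T.card : ℝ) := by exact_mod_cast hle
        _ = _ := by rw [hTcard]
    -- limits
    have hKtend : Tendsto (fun m : ℕ => (Kf m : ℝ)) atTop atTop := by
      apply tendsto_atTop_mono (f := fun m : ℕ => (m:ℝ))
      · intro m
        have : m ≤ Kf m := by simp [hKf]; nlinarith [hDt1]
        exact_mod_cast this
      · exact tendsto_natCast_atTop_atTop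
    have hRtend : Tendsto (fun m : ℕ => (Kf m : ℝ) * u + (CA + 1)) atTop atTop := by
      apply tendsto_atTop_add_const_right
      exact hKtend.atTop_mul_const hu0
    have h1 : Tendsto (fun m : ℕ =>
        (({γ : Fin n → ℤ | d γ < (Kf m : ℝ) * u + (CA + 1)}.ncard : ℝ))
          / ((Kf m : ℝ) * u + (CA + 1)) ^ n) atTop (nhds ω) := hω.comp hRtend
    have h2 : Tendsto (fun m : ℕ => ((Kf m : ℝ) * u + (CA + 1)) / (Kf m : ℝ))
        atTop (nhds u) := by
      have e : ∀ m : ℕ, ((Kf m : ℝ) * u + (CA + 1)) / (Kf m : ℝ)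
          = u + (CA + 1) / (Kf m : ℝ) := by
        intro m
        have : (Kf m : ℝ) ≠ 0 := by
          have := hKf1 m
          positivity
        field_simp
      simp_rw [e]
      have h3 : Tendsto (fun m : ℕ => (CA + 1) / (Kf m : ℝ)) atTop (nhds 0) :=
        tendsto_const_nhds.div_atTop hKtend
      simpa using tendsto_const_nhds.add h3
    have h4 : Tendsto (fun m : ℕ =>
        ((({γ : Fin n → ℤ | d γ < (Kf m : ℝ) * u + (CA + 1)}.ncard : ℝ))
          / ((Kf m : ℝ) * u + (CA + 1)) ^ n)
        * (((Kf m : ℝ) * u + (CA + 1)) / (Kf m : ℝ)) ^ n) atTop (nhds (ω * u ^ n)) :=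
      h1.mul (h2.pow n)
    apply ge_of_tendsto h4
    apply Eventually.of_forall
    intro m
    have hKpos : (0:ℝ) < (Kf m : ℝ) := by
      have := hKf1 m
      exact_mod_cast by omega
    have hRpos : (0:ℝ) < (Kf m : ℝ) * u + (CA + 1) := by positivity
    have e5 : ((({γ : Fin n → ℤ | d γ < (Kf m : ℝ) * u + (CA + 1)}.ncard : ℝ))
          / ((Kf m : ℝ) * u + (CA + 1)) ^ n)
        * (((Kf m : ℝ) * u + (CA + 1)) / (Kf m : ℝ)) ^ n
        = (({γ : Fin n → ℤ | d γ < (Kf m : ℝ) * u + (CA + 1)}.ncard : ℝ)) / (Kf m : ℝ) ^ n := by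
      rw [div_pow]
      field_simp
    rw [e5, le_div_iff₀ (by positivity)]
    exact hcard m
  -- let η → 0
  have hlim : Tendsto (fun m : ℕ => ω * (t + 1/(m+1 : ℝ) + 3 * n * D) ^ n) atTop
      (nhds (ω * (t + 3 * n * D) ^ n)) := by
    have h1 : Tendsto (fun m : ℕ => 1/((m:ℝ)+1)) atTop (nhds 0) :=
      tendsto_one_div_add_atTop_nhds_zero_nat
    have h2 : Tendsto (fun m : ℕ => t + 1/((m:ℝ)+1) + 3 * n * D) atTop
        (nhds (t + 3 * n * D)) := by
      have := (tendsto_const_nhds (x := t)).add h1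
      have h3 := this.add (tendsto_const_nhds (x := 3 * (n:ℝ) * D))
      simpa using h3
    have h4 := (tendsto_const_nhds (x := ω)).mul (h2.pow n)
    simpa using h4
  apply ge_of_tendsto hlim
  apply Eventually.of_forall
  intro m
  exact main _ (by positivity)



/-- sublinear bound on components of optimal cycles: with
`Γ = H₁(X̄,ℤ) ≅ ℤⁿ` acting on the homology covering `(X,d)` of a closed
Riemannian manifold with `diam(X̄) < D` and `ω(Γ) < Ω`, let `mass γ` be the
mass of the class `γ` (sandwiched between the stable norm and the orbit
displacement) and `N γ` the minimal number of connected components of a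
mass-minimizing integral cycle representing `γ` (so that `γ` splits as a sum
of `N γ` distinct nonzero classes whose masses add up to `mass γ`). Then
either `N γ ≤ 2^{18n³}·n^{2n}·(n!)^{n(n+2)}·(ΩDⁿ+1)^{6n²}`, or
`N γ ≤ 2·3^{2n}·Ω^{1/(n+1)}·(mass γ)^{n/(n+1)}`. -/
theorem sublinear_bound_components_optimal_cycles
    {X : Type*} [MetricSpace X] (n : ℕ)
    (ρ : (Fin n → ℤ) → X → X)
    (hiso : ∀ γ x y, dist (ρ γ x) (ρ γ y) = dist x y)
    (hadd : ∀ γ γ' x, ρ (γ + γ') x = ρ γ (ρ γ' x))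
    (hzero : ∀ x, ρ 0 x = x)
    (hfree : ∀ γ x, ρ γ x = x → γ = 0)
    (hpd : ∀ (x : X) (r : ℝ), {γ : Fin n → ℤ | dist x (ρ γ x) ≤ r}.Finite)
    (hlength : ∀ x y : X, ∀ ε > (0:ℝ), ∃ z : X,
      dist x z ≤ dist x y / 2 + ε ∧ dist z y ≤ dist x y / 2 + ε)
    (x₀ : X) (D Ω ω : ℝ)
    (hcodiam : ∀ x y : X, ∃ γ : Fin n → ℤ, dist x (ρ γ y) < D)
    (hω : Tendsto (fun R : ℝ =>
        (({γ : Fin n → ℤ | dist x₀ (ρ γ x₀) < R}.ncard : ℝ)) / R ^ n)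
      atTop (nhds ω))
    (hΩ : ω < Ω)
    (nst : (Fin n → ℤ) → ℝ)
    (hnst : ∀ γ : Fin n → ℤ,
      Tendsto (fun k : ℕ => dist x₀ (ρ (k • γ) x₀) / (k : ℝ)) atTop (nhds (nst γ)))
    (mass : (Fin n → ℤ) → ℝ)
    (hmass₁ : ∀ γ, nst γ ≤ mass γ)
    (hmass₂ : ∀ γ, mass γ ≤ dist x₀ (ρ γ x₀))
    (N : (Fin n → ℤ) → ℕ)
    (hdecomp : ∀ γ : Fin n → ℤ, ∃ g : Fin (N γ) → (Fin n → ℤ),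
      Function.Injective g ∧ (∀ i, g i ≠ 0) ∧
      (∑ i, g i) = γ ∧ (∑ i, mass (g i)) = mass γ) :
    ∀ γ : Fin n → ℤ,
      (N γ : ℝ) ≤ 2 ^ (18 * n ^ 3) * (n : ℝ) ^ (2 * n)
          * ((n.factorial : ℝ)) ^ (n * (n + 2)) * (Ω * D ^ n + 1) ^ (6 * n ^ 2) ∨
      (N γ : ℝ) ≤ 2 * 3 ^ (2 * n) * Ω ^ (((n : ℝ) + 1)⁻¹)
          * (mass γ) ^ ((n : ℝ) / ((n : ℝ) + 1)) := by
  classical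
  intro γ
  rcases Nat.eq_zero_or_pos n with hn0 | hnpos
  · left
    subst hn0
    obtain ⟨g, hginj, hgne, -, -⟩ := hdecomp γ
    have hN0 : N γ = 0 := by
      by_contra h
      have i0 : Fin (N γ) := ⟨0, Nat.pos_of_ne_zero h⟩
      exact hgne i0 (funext fun j => j.elim0)
    rw [hN0]
    norm_num
  -- main case n ≥ 1
  have hn1 : 1 ≤ n := hnpos
  have hnR : (1:ℝ) ≤ (n:ℝ) := by exact_mod_cast hn1
  set d : (Fin n → ℤ) → ℝ := fun g => dist x₀ (ρ g x₀) with hd_def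
  have hD : 0 < D := by
    obtain ⟨σ, hσ⟩ := hcodiam x₀ x₀
    exact lt_of_le_of_lt dist_nonneg hσ
  have hdnn : ∀ a, 0 ≤ d a := fun a => dist_nonneg
  have hdadd : ∀ a b, d (a + b) ≤ d a + d b := by
    intro a b
    have e : ρ (a + b) x₀ = ρ a (ρ b x₀) := hadd a b x₀
    calc d (a + b) = dist x₀ (ρ (a+b) x₀) := rfl
      _ ≤ dist x₀ (ρ a x₀) + dist (ρ a x₀) (ρ (a+b) x₀) := dist_triangle _ _ _
      _ = d a + d b := by rw [e, hiso a x₀ (ρ b x₀)]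
  have hdsmul : ∀ (m : ℕ) a, d (m • a) ≤ m * d a := by
    intro m a
    induction m with
    | zero => simp [hd_def, hzero]
    | succ k ih =>
      calc d ((k+1) • a) = d (k • a + a) := by rw [succ_nsmul]
        _ ≤ d (k • a) + d a := hdadd _ _
        _ ≤ k * d a + d a := by linarith
        _ = (k+1 : ℕ) * d a := by push_cast; ring
  have hdsum : ∀ (s : Finset (Fin n)) (f : Fin n → (Fin n → ℤ)),
      d (∑ i ∈ s, f i) ≤ ∑ i ∈ s, d (f i) := by
    intro s f
    induction s using Finset.induction_on with
    | empty => simp [hd_def, hzero]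
    | insert x s hx ih =>
      rw [Finset.sum_insert hx, Finset.sum_insert hx]
      exact le_trans (hdadd _ _) (by linarith)
  -- nst basics
  have hnst0 : nst 0 = 0 := by
    have h := hnst 0
    have e : (fun k : ℕ => dist x₀ (ρ (k • (0 : Fin n → ℤ)) x₀) / (k:ℝ)) = fun _ => (0:ℝ) := by
      funext k; simp [smul_zero, hzero]
    rw [e] at h
    exact tendsto_nhds_unique h tendsto_const_nhds
  have hnstnn : ∀ a, 0 ≤ nst a :=
    fun a => ge_of_tendsto (hnst a) (Eventually.of_forall fun k => by positivity)
  -- generation by classes of displacement ≤ 3D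
  have hgen : ∀ g : Fin n → ℤ, g ∈ Submodule.span ℤ {σ : Fin n → ℤ | d σ ≤ 3 * D} := by
    have main : ∀ (k : ℕ) (g : Fin n → ℤ), d g ≤ 2 * D + D / 2 * (2 ^ k + 1) →
        g ∈ Submodule.span ℤ {σ : Fin n → ℤ | d σ ≤ 3 * D} := by
      intro k
      induction k with
      | zero =>
        intro g hg
        apply Submodule.subset_span
        simp only [Set.mem_setOf_eq]
        norm_num at hg
        linarith
      | succ k ih =>
        intro g hg
        obtain ⟨z, hz1, hz2⟩ := hlength x₀ (ρ g x₀) (D / 4) (by linarith)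
        obtain ⟨σ, hσ⟩ := hcodiam z x₀
        have h2k : (2:ℝ) ^ (k+1) = 2 * 2 ^ k := by ring
        have hσd : d σ ≤ dist x₀ z + dist z (ρ σ x₀) := dist_triangle _ _ _
        have h1 : d σ ≤ 2 * D + D / 2 * (2 ^ k + 1) := by
          rw [h2k] at hg
          have := hz1
          simp only [hd_def] at hg ⊢
          linarith
        have egσ : ρ σ (ρ (g - σ) x₀) = ρ g x₀ := by
          rw [← hadd]; congr 1; abel
        have hgsd : d (g - σ) = dist (ρ σ x₀) (ρ g x₀) := by
          rw [hd_def]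
          simp only
          rw [← hiso σ x₀ (ρ (g - σ) x₀), egσ]
        have h2 : d (g - σ) ≤ 2 * D + D / 2 * (2 ^ k + 1) := by
          rw [h2k] at hg
          rw [hgsd]
          have htri : dist (ρ σ x₀) (ρ g x₀) ≤ dist (ρ σ x₀) z + dist z (ρ g x₀) :=
            dist_triangle _ _ _
          rw [dist_comm (ρ σ x₀) z] at htri
          simp only [hd_def] at hg
          linarith
        have := Submodule.add_mem _ (ih σ h1) (ih (g - σ) h2)
        simpa using this
    intro g
    obtain ⟨k, hk⟩ := pow_unbounded_of_one_lt (R := ℝ) (d g / (D/2)) (by norm_num : (1:ℝ) < 2)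
    apply main k
    rw [div_lt_iff₀ (by linarith : (0:ℝ) < D/2)] at hk
    nlinarith [pow_pos (show (0:ℝ) < 2 by norm_num) k]
  -- independent vectors with displacement ≤ 3D
  obtain ⟨v, hvS, hvdet⟩ := aux_vectors n {σ : Fin n → ℤ | d σ ≤ 3 * D} hgen
  have hvd : ∀ i, d (v i) ≤ 3 * D := fun i => hvS i
  -- the counting estimate
  have hd0 : d 0 = 0 := by simp [hd_def, hzero]
  have hcount : ∀ t : ℝ, 0 ≤ t → ∀ A : Finset (Fin n → ℤ),
      (∀ a ∈ A, nst a ≤ t) → (A.card : ℝ) ≤ ω * (t + 3 * n * D) ^ n :=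
    fun t ht A hA => aux_count n hn1 D ω hD d hdnn hdadd hd0
      (fun r => hpd x₀ r) hω nst hnst hnstnn v hvd hvdet t ht A hA
  -- positivity of ω
  have hc30 : (0:ℝ) < 3 * n * D := by nlinarith
  have hωpos : 0 < ω := by
    have h1 := hcount 0 le_rfl {0} (by
      intro a ha
      rw [Finset.mem_singleton] at ha
      rw [ha, hnst0])
    simp only [Finset.card_singleton, Nat.cast_one, zero_add] at h1
    nlinarith [pow_pos hc30 n]
  have hΩpos : 0 < Ω := lt_trans hωpos hΩ
  -- decomposition of γ
  obtain ⟨g, hginj, hgne, hgsum, hgmass⟩ := hdecomp γ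
  have hmassnn : ∀ i, 0 ≤ mass (g i) := fun i => le_trans (hnstnn _) (hmass₁ _)
  have hM0 : 0 ≤ mass γ := by
    rw [← hgmass]
    exact Finset.sum_nonneg fun i _ => hmassnn i
  set c3 : ℝ := 3 * n * D with hc3_def
  by_cases hcase : (N γ : ℝ) ≤ 2 * ω * (2 * c3) ^ n
  · left
    apply aux_case1 n hn1 (Ω * D ^ n) (by positivity)
    calc (N γ : ℝ) ≤ 2 * ω * (2 * c3) ^ n := hcase
      _ ≤ 2 * Ω * (2 * c3) ^ n := by
          apply mul_le_mul_of_nonneg_right (by linarith) (by positivity)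
      _ = 2 * 6 ^ n * (n:ℝ) ^ n * (Ω * D ^ n) := by
          rw [hc3_def, show (2 * (3 * (n:ℝ) * D)) = 6 * ((n:ℝ) * D) by ring, mul_pow, mul_pow]
          ring
  · right
    push_neg at hcase
    have hNpos : (0:ℝ) < (N γ : ℝ) := lt_of_le_of_lt (by positivity) hcase
    have h2ω : (0:ℝ) < 2 * ω := by linarith
    have hbase : (2 * c3) ^ n < (N γ : ℝ) / (2 * ω) := by
      rw [lt_div_iff₀ h2ω]
      nlinarith
    set Q : ℝ := ((N γ : ℝ) / (2 * ω)) ^ ((n:ℝ)⁻¹) with hQ_def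
    have hQnn : 0 ≤ Q := Real.rpow_nonneg (by positivity) _
    have hroot : 2 * c3 ≤ Q := by
      have h0 : (0:ℝ) ≤ 2 * c3 := by positivity
      have h1 := Real.rpow_le_rpow (pow_nonneg h0 n) (le_of_lt hbase) (by positivity : (0:ℝ) ≤ (n:ℝ)⁻¹)
      rw [← Real.rpow_natCast (2 * c3) n, ← Real.rpow_mul h0,
        mul_inv_cancel₀ (by positivity : (n:ℝ) ≠ 0), Real.rpow_one] at h1
      exact le_trans h1 le_rfl
    set T : ℝ := Q - c3 with hT_def
    have hT1 : c3 ≤ T := by simp only [hT_def]; linarith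
    have hTpos : 0 < T := lt_of_lt_of_le hc30 hT1
    -- count of small masses
    set Sm : Finset (Fin (N γ)) := Finset.univ.filter (fun i => mass (g i) ≤ T) with hSm_def
    have hSm : (Sm.card : ℝ) ≤ ω * (T + c3) ^ n := by
      have h1 := hcount T (le_of_lt hTpos) (Sm.image g) (by
        intro a ha
        rw [Finset.mem_image] at ha
        obtain ⟨i, hi, rfl⟩ := ha
        rw [hSm_def, Finset.mem_filter] at hi
        exact le_trans (hmass₁ _) hi.2)
      rwa [Finset.card_image_of_injective _ hginj] at h1
    have hQpow : Q ^ (n:ℕ) = (N γ : ℝ) / (2 * ω) := by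
      rw [hQ_def, ← Real.rpow_natCast (((N γ : ℝ) / (2 * ω)) ^ ((n:ℝ)⁻¹)) n,
        ← Real.rpow_mul (by positivity), inv_mul_cancel₀ (by positivity : (n:ℝ) ≠ 0),
        Real.rpow_one]
    have hSm2 : (Sm.card : ℝ) ≤ (N γ : ℝ) / 2 := by
      calc (Sm.card : ℝ) ≤ ω * (T + c3) ^ n := hSm
        _ = ω * ((N γ : ℝ) / (2 * ω)) := by
            rw [hT_def, sub_add_cancel, hQpow]
        _ = (N γ : ℝ) / 2 := by field_simp
    -- big masses
    set Bg : Finset (Fin (N γ)) := Finset.univ.filter (fun i => ¬ (mass (g i) ≤ T)) with hBg_def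
    have hcards : Sm.card + Bg.card = N γ := by
      rw [hSm_def, hBg_def]
      rw [Finset.card_filter_add_card_filter_not]
      simp
    have hbig : (N γ : ℝ) / 2 ≤ (Bg.card : ℝ) := by
      have : (Sm.card : ℝ) + (Bg.card : ℝ) = (N γ : ℝ) := by exact_mod_cast hcards
      linarith
    have hMT : (N γ : ℝ) / 2 * T ≤ mass γ := by
      rw [← hgmass]
      calc (N γ : ℝ) / 2 * T ≤ (Bg.card : ℝ) * T := by
            apply mul_le_mul_of_nonneg_right hbig (le_of_lt hTpos)
        _ ≤ ∑ i ∈ Bg, mass (g i) := by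
            have h1 : ∀ i ∈ Bg, T ≤ mass (g i) := by
              intro i hi
              rw [hBg_def, Finset.mem_filter] at hi
              linarith [hi.2]
            calc (Bg.card : ℝ) * T = Bg.card • T := by rw [nsmul_eq_mul]
              _ ≤ ∑ i ∈ Bg, mass (g i) := Finset.card_nsmul_le_sum Bg _ T h1
        _ ≤ ∑ i, mass (g i) :=
            Finset.sum_le_sum_of_subset_of_nonneg (Finset.subset_univ _)
              (fun i _ _ => hmassnn i)
    have final : (N γ : ℝ) / 4 * ((N γ : ℝ) / (2 * Ω)) ^ ((n:ℝ)⁻¹) ≤ mass γ := by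
      have hmono : ((N γ : ℝ) / (2 * Ω)) ^ ((n:ℝ)⁻¹) ≤ Q := by
        rw [hQ_def]
        apply Real.rpow_le_rpow (by positivity) _ (by positivity)
        apply div_le_div_of_nonneg_left (le_of_lt hNpos) h2ω (by linarith)
      calc (N γ : ℝ) / 4 * ((N γ : ℝ) / (2 * Ω)) ^ ((n:ℝ)⁻¹) ≤ (N γ : ℝ) / 4 * Q := by
            apply mul_le_mul_of_nonneg_left hmono (by positivity)
        _ ≤ (N γ : ℝ) / 2 * T := by
            rw [hT_def]
            nlinarith
        _ ≤ mass γ := hMT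
    exact aux_case2 n hn1 _ _ _ (Nat.cast_nonneg _) hΩpos hM0 final
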